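/- Let A, B be nonempty finite types, ε∈[0,1], and k, n ≥ 1 integers. Let Γ be a positive semidefinite matrix on A⊗B with Tr_B[Γ] = I_A, and let Γ^{(n)} be the n-fold tensor power of Γ: the matrix on (Fin n→A)⊗(Fin n→B) with entries Γ^{(n)}((f,g),(f',g')) = ∏_{i∈Fin n} Γ((f i, g i),(f' i, g' i)). Consider the SDP constraints for the channel with Choi operator Γ^{(n)}: a real λ ≥ 0, a quantum state ρ on (Fin n→A), and matrices Q^v on (Fin n→A)⊗(B-copies indexed by Fin k, each copy equal to Fin n→B) for v∈{0,1}^k, subject to: Σ_v Q^v = ρ⊗I; each Q^v positive semidefinite; permutation covariance of (Q^v) under the k B-blocks; positive partial transposes on the first i B-blocks for every i∈{1,…,k}; Σ_{v: v_1=0} Tr over the A-part of Q^v ≤ λ·I; the non-signaling condition Σ_{v_k} Tr_A[Q^v] = (1/|B|^n)·Σ_{v_k} Tr_{A,B_k}[Q^v]⊗I_{B_k} for every (v_1,…,v_{k−1}); and (1/|B|^{n(k−1)})·Σ_{v: v_1=0} Tr[Q^v·(Γ^{(n)}⊗I)] ≥ 1−ε, with Γ^{(n)} acting on the A-part and the first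 B-block. For a permutation σ of Fin n, let W^σ act by simultaneously reindexing the Fin n coordinate of the A-part and of every B-block. Then: (i) if (λ, ρ, (Q^v)_v) satisfies all the constraints, then for every permutation σ of Fin n, (λ, W^σρW^{σ†}, (W^σQ^vW^{σ†})_v) also satisfies them; and (ii) the uniformly symmetrized point (λ, (1/n!)Σ_σ W^σρW^{σ†}, ((1/n!)Σ_σ W^σQ^vW^{σ†})_v) satisfies all the constraints. -/

import Mathlib

open Matrix Kronecker ComplexOrder

/-- Simultaneous reindexing of the `Fin n` coordinate of an `n`-fold `A` system by a
permutation `σ` of `Fin n` (conjugation by the permutation unitary `W^σ`). -/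
def permConjA {A : Type} {n : ℕ} (σ : Equiv.Perm (Fin n))
    (ρ : Matrix (Fin n → A) (Fin n → A) ℂ) : Matrix (Fin n → A) (Fin n → A) ℂ :=
  Matrix.of fun f f' => ρ (f ∘ σ) (f' ∘ σ)

/-- Simultaneous reindexing of the `Fin n` coordinate in the `A`-part and in every one of
the `k` `B`-blocks by a permutation `σ` of `Fin n` (conjugation by `W^σ`). -/
def permConjQ {A B : Type} {n k : ℕ} (σ : Equiv.Perm (Fin n))
    (Q : Matrix ((Fin n → A) × (Fin k → Fin n → B)) ((Fin n → A) × (Fin k → Fin n → B)) ℂ) :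
    Matrix ((Fin n → A) × (Fin k → Fin n → B)) ((Fin n → A) × (Fin k → Fin n → B)) ℂ :=
  Matrix.of fun p q =>
    Q (p.1 ∘ σ, fun j => p.2 j ∘ σ) (q.1 ∘ σ, fun j => q.2 j ∘ σ)

/-- The constraints of the SDP of Theorem 1 of the paper, applied to the `n`-fold tensor
power channel with Choi operator `Γn`: `(λ, ρ, (Q^v)_v)` is a feasible point. -/
def SDPFeasible (A B : Type) [Fintype A] [DecidableEq A] [Fintype B] [DecidableEq B]
    (ε : ℝ) (k n : ℕ) (hk : 1 ≤ k)
    (Γn : Matrix ((Fin n → A) × (Fin n → B)) ((Fin n → A) × (Fin n → B)) ℂ)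
    (lam : ℝ) (ρ : Matrix (Fin n → A) (Fin n → A) ℂ)
    (Q : (Fin k → Fin 2) →
      Matrix ((Fin n → A) × (Fin k → Fin n → B)) ((Fin n → A) × (Fin k → Fin n → B)) ℂ) :
    Prop :=
  0 ≤ lam ∧ ρ.PosSemidef ∧ ρ.trace = 1
  -- Σ_v Q^v = ρ ⊗ I
  ∧ (∑ v : Fin k → Fin 2, Q v =
      Matrix.of fun (p q : (Fin n → A) × (Fin k → Fin n → B)) =>
        ρ p.1 q.1 * (if p.2 = q.2 then (1 : ℂ) else 0))
  -- each Q^v is positive semidefinite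
  ∧ (∀ v, (Q v).PosSemidef)
  -- permutation covariance under permutations of the k B-blocks
  ∧ (∀ v : Fin k → Fin 2, ∀ π : Equiv.Perm (Fin k),
      (Matrix.of fun (p q : (Fin n → A) × (Fin k → Fin n → B)) =>
        Q (v ∘ π) (p.1, p.2 ∘ π) (q.1, q.2 ∘ π)) = Q v)
  -- positive partial transpose on the first i B-blocks
  ∧ (∀ v : Fin k → Fin 2, ∀ i : ℕ, 1 ≤ i → i ≤ k →
      Matrix.PosSemidef (Matrix.of fun (p q : (Fin n → A) × (Fin k → Fin n → B)) =>
        Q v (p.1, fun j => if (j : ℕ) < i then q.2 j else p.2 j)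
            (q.1, fun j => if (j : ℕ) < i then p.2 j else q.2 j)))
  -- Σ_{v : v₁ = 0} Tr_A[Q^v] ≤ λ I in the Loewner order
  ∧ Matrix.PosSemidef
      ((lam : ℂ) • (1 : Matrix (Fin k → Fin n → B) (Fin k → Fin n → B) ℂ)
        - Matrix.of fun (g g' : Fin k → Fin n → B) =>
            ∑ v ∈ Finset.univ.filter (fun v : Fin k → Fin 2 => v ⟨0, by omega⟩ = 0),
              ∑ a, Q v (a, g) (a, g'))
  -- non-signaling condition on the last B-block
  ∧ (∀ u : Fin k → Fin 2, ∀ g g' : Fin k → Fin n → B,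
      (∑ vk : Fin 2, ∑ a, Q (Function.update u ⟨k - 1, by omega⟩ vk) (a, g) (a, g'))
        = ((Fintype.card B : ℂ) ^ n)⁻¹
          * (∑ vk : Fin 2, ∑ a, ∑ b : Fin n → B,
              Q (Function.update u ⟨k - 1, by omega⟩ vk)
                (a, Function.update g ⟨k - 1, by omega⟩ b)
                (a, Function.update g' ⟨k - 1, by omega⟩ b))
          * (if g ⟨k - 1, by omega⟩ = g' ⟨k - 1, by omega⟩ then 1 else 0))
  -- success probability constraint
  ∧ (1 - ε : ℂ) ≤ ((Fintype.card B : ℂ) ^ (n * (k - 1)))⁻¹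
      * ∑ v ∈ Finset.univ.filter (fun v : Fin k → Fin 2 => v ⟨0, by omega⟩ = 0),
          (Q v * Matrix.of (fun (p q : (Fin n → A) × (Fin k → Fin n → B)) =>
            Γn (p.1, p.2 ⟨0, by omega⟩) (q.1, q.2 ⟨0, by omega⟩)
              * ∏ j ∈ Finset.univ.erase ((⟨0, by omega⟩ : Fin k)),
                  (if p.2 j = q.2 j then (1 : ℂ) else 0))).trace

section Helpers

variable {n k : ℕ}

def cEquiv (X : Type) {n : ℕ} (σ : Equiv.Perm (Fin n)) : (Fin n → X) ≃ (Fin n → X) where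
  toFun f := f ∘ σ
  invFun f := f ∘ σ.symm
  left_inv f := by funext i; simp
  right_inv f := by funext i; simp

@[simp] lemma cEquiv_apply {X : Type} (σ : Equiv.Perm (Fin n)) (f : Fin n → X) :
    cEquiv X σ f = f ∘ σ := rfl

def bEquiv (B : Type) {n k : ℕ} (σ : Equiv.Perm (Fin n)) :
    (Fin k → Fin n → B) ≃ (Fin k → Fin n → B) where
  toFun g := fun j => g j ∘ σ
  invFun g := fun j => g j ∘ σ.symm
  left_inv g := by funext j i; simp
  right_inv g := by funext j i; simp

@[simp] lemma bEquiv_apply {B : Type} (σ : Equiv.Perm (Fin n)) (g : Fin k → Fin n → B) :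
    bEquiv B σ g = fun j => g j ∘ σ := rfl

def pEquiv {A B : Type} {n k : ℕ} (σ : Equiv.Perm (Fin n)) :
    ((Fin n → A) × (Fin k → Fin n → B)) ≃ ((Fin n → A) × (Fin k → Fin n → B)) where
  toFun p := (p.1 ∘ σ, fun j => p.2 j ∘ σ)
  invFun p := (p.1 ∘ σ.symm, fun j => p.2 j ∘ σ.symm)
  left_inv p := by refine Prod.ext ?_ ?_ <;> funext <;> simp
  right_inv p := by refine Prod.ext ?_ ?_ <;> funext <;> simp

@[simp] lemma pEquiv_apply {A B : Type} (σ : Equiv.Perm (Fin n))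
    (p : (Fin n → A) × (Fin k → Fin n → B)) :
    pEquiv σ p = (p.1 ∘ σ, fun j => p.2 j ∘ σ) := rfl

lemma trace_submatrix_equiv' {m l : Type*} [Fintype m] [Fintype l]
    (e : l ≃ m) (M : Matrix m m ℂ) : (M.submatrix e e).trace = M.trace := by
  simpa [Matrix.trace, Matrix.diag] using Equiv.sum_comp e (fun i => M i i)

lemma entry_eq {m l : Type*} {M N : Matrix m l ℂ} (h : M = N) (i : m) (j : l) :
    M i j = N i j := by rw [h]

lemma update_comp {B : Type} (σ : Equiv.Perm (Fin n)) (g : Fin k → Fin n → B)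
    (idx : Fin k) (b : Fin n → B) :
    (fun j => Function.update g idx b j ∘ σ)
      = Function.update (fun j => g j ∘ σ) idx (b ∘ σ) := by
  funext j
  rcases eq_or_ne j idx with h | h <;> simp [h, Function.update_apply]

lemma permConjA_eq {A : Type} (σ : Equiv.Perm (Fin n)) (ρ : Matrix (Fin n → A) (Fin n → A) ℂ) :
    permConjA σ ρ = ρ.submatrix (cEquiv A σ) (cEquiv A σ) := rfl

lemma permConjQ_eq {A B : Type} (σ : Equiv.Perm (Fin n))
    (Q : Matrix ((Fin n → A) × (Fin k → Fin n → B)) ((Fin n → A) × (Fin k → Fin n → B)) ℂ) :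
    permConjQ σ Q = Q.submatrix (pEquiv σ) (pEquiv σ) := rfl

end Helpers


lemma psd_smul' {m : Type*} [Fintype m] {M : Matrix m m ℂ} (hM : M.PosSemidef)
    {c : ℂ} (hc : 0 ≤ c) : (c • M).PosSemidef := by
  refine ⟨?_, fun x => ?_⟩
  · rw [Matrix.IsHermitian, Matrix.conjTranspose_smul, hM.1]
    congr 1
    rw [Complex.star_def]
    exact Complex.conj_eq_iff_im.2 (Complex.nonneg_iff.1 hc).2.symm
  · exact (hM.smul hc).2 x

lemma psd_sum' {m ι : Type*} [Fintype m] [Fintype ι] (M : ι → Matrix m m ℂ)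
    (h : ∀ i, (M i).PosSemidef) : (∑ i, M i).PosSemidef :=
  Finset.sum_induction M _ (fun _ _ ha hb => ha.add hb) Matrix.PosSemidef.zero
    (fun i _ => h i)

lemma mul_sum_comm₃ {ι₁ ι₂ ι₃ : Type*} (s : Finset ι₁) (t : Finset ι₂) (r : Finset ι₃)
    (c : ℂ) (F : ι₁ → ι₂ → ι₃ → ℂ) :
    ∑ i ∈ s, ∑ j ∈ t, c * ∑ l ∈ r, F i j l = c * ∑ l ∈ r, ∑ i ∈ s, ∑ j ∈ t, F i j l := by
  simp only [Finset.mul_sum]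
  calc ∑ i ∈ s, ∑ j ∈ t, ∑ l ∈ r, c * F i j l
      = ∑ i ∈ s, ∑ l ∈ r, ∑ j ∈ t, c * F i j l :=
        Finset.sum_congr rfl fun i _ => Finset.sum_comm
    _ = ∑ l ∈ r, ∑ i ∈ s, ∑ j ∈ t, c * F i j l := Finset.sum_comm

lemma mul_sum_comm₄ {ι₁ ι₂ ι₃ ι₄ : Type*} (s : Finset ι₁) (t : Finset ι₂) (w : Finset ι₃)
    (r : Finset ι₄) (c : ℂ) (F : ι₁ → ι₂ → ι₃ → ι₄ → ℂ) :
    ∑ i ∈ s, ∑ j ∈ t, ∑ m ∈ w, c * ∑ l ∈ r, F i j m l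
      = c * ∑ l ∈ r, ∑ i ∈ s, ∑ j ∈ t, ∑ m ∈ w, F i j m l := by
  simp only [Finset.mul_sum]
  calc ∑ i ∈ s, ∑ j ∈ t, ∑ m ∈ w, ∑ l ∈ r, c * F i j m l
      = ∑ i ∈ s, ∑ j ∈ t, ∑ l ∈ r, ∑ m ∈ w, c * F i j m l :=
        Finset.sum_congr rfl fun i _ => Finset.sum_congr rfl fun j _ => Finset.sum_comm
    _ = ∑ i ∈ s, ∑ l ∈ r, ∑ j ∈ t, ∑ m ∈ w, c * F i j m l :=
        Finset.sum_congr rfl fun i _ => Finset.sum_comm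
    _ = ∑ l ∈ r, ∑ i ∈ s, ∑ j ∈ t, ∑ m ∈ w, c * F i j m l := Finset.sum_comm


theorem feas_perm
    (A B : Type) [Fintype A] [DecidableEq A] [Nonempty A]
    [Fintype B] [DecidableEq B] [Nonempty B]
    (ε : ℝ) (k n : ℕ) (hk : 1 ≤ k)
    (Γ : Matrix (A × B) (A × B) ℂ)
    (Γn : Matrix ((Fin n → A) × (Fin n → B)) ((Fin n → A) × (Fin n → B)) ℂ)
    (hΓn : Γn = Matrix.of fun (p q : (Fin n → A) × (Fin n → B)) =>
        ∏ i, Γ (p.1 i, p.2 i) (q.1 i, q.2 i))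
    (lam : ℝ) (ρ : Matrix (Fin n → A) (Fin n → A) ℂ)
    (Q : (Fin k → Fin 2) →
      Matrix ((Fin n → A) × (Fin k → Fin n → B)) ((Fin n → A) × (Fin k → Fin n → B)) ℂ)
    (hfeas : SDPFeasible A B ε k n hk Γn lam ρ Q) (σ : Equiv.Perm (Fin n)) :
    SDPFeasible A B ε k n hk Γn lam (permConjA σ ρ) (fun v => permConjQ σ (Q v)) := by
  obtain ⟨h0, h1, h2, h3, h4, h5, h6, h7, h8, h9⟩ := hfeas
  have key8 : ∀ (M : Matrix ((Fin n → A) × (Fin k → Fin n → B))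
        ((Fin n → A) × (Fin k → Fin n → B)) ℂ) (g g' : Fin k → Fin n → B),
      (∑ a, permConjQ σ M (a, g) (a, g'))
        = ∑ a, M (a, fun j => g j ∘ σ) (a, fun j => g' j ∘ σ) := by
    intro M g g'
    exact Equiv.sum_comp (cEquiv A σ)
      (fun a => M (a, fun j => g j ∘ σ) (a, fun j => g' j ∘ σ))
  refine ⟨h0, ?_, ?_, ?_, ?_, ?_, ?_, ?_, ?_, ?_⟩
  · rw [permConjA_eq]; exact h1.submatrix _
  · rw [permConjA_eq, trace_submatrix_equiv', h2]
  · ext ⟨f, g⟩ ⟨f', g'⟩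
    have h := entry_eq h3 (f ∘ σ, fun j => g j ∘ σ) (f' ∘ σ, fun j => g' j ∘ σ)
    simp only [Matrix.sum_apply, Matrix.of_apply, permConjQ, permConjA] at h ⊢
    rw [h]
    congr 1
    have : ((fun j => g j ∘ σ) = fun j => g' j ∘ σ) ↔ g = g' := by
      simpa using (bEquiv B σ).injective.eq_iff (a := g) (b := g')
    simp only [this]
  · intro v; show (permConjQ σ (Q v)).PosSemidef
    rw [permConjQ_eq]; exact (h4 v).submatrix _
  · intro v π
    ext ⟨f, g⟩ ⟨f', g'⟩
    have h := entry_eq (h5 v π) (f ∘ σ, fun j => g j ∘ σ) (f' ∘ σ, fun j => g' j ∘ σ)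
    simp only [Matrix.of_apply, permConjQ] at h ⊢
    exact h
  · intro v i hi1 hi2
    have heq : (Matrix.of fun (p q : (Fin n → A) × (Fin k → Fin n → B)) =>
          permConjQ σ (Q v) (p.1, fun j => if (j : ℕ) < i then q.2 j else p.2 j)
            (q.1, fun j => if (j : ℕ) < i then p.2 j else q.2 j))
        = (Matrix.of fun (p q : (Fin n → A) × (Fin k → Fin n → B)) =>
          Q v (p.1, fun j => if (j : ℕ) < i then q.2 j else p.2 j)
            (q.1, fun j => if (j : ℕ) < i then p.2 j else q.2 j)).submatrix
              (pEquiv σ) (pEquiv σ) := by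
      ext ⟨f, g⟩ ⟨f', g'⟩
      simp only [Matrix.of_apply, Matrix.submatrix_apply, permConjQ, pEquiv_apply]
      refine congrArg₂ (Q v) (Prod.ext rfl ?_) (Prod.ext rfl ?_) <;>
        funext j <;> by_cases hj : (j : ℕ) < i <;> simp [hj]
    rw [heq]
    exact (h6 v i hi1 hi2).submatrix _
  · have heq : ((lam : ℂ) • (1 : Matrix (Fin k → Fin n → B) (Fin k → Fin n → B) ℂ)
        - Matrix.of fun (g g' : Fin k → Fin n → B) =>
            ∑ v ∈ Finset.univ.filter (fun v : Fin k → Fin 2 => v ⟨0, by omega⟩ = 0),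
              ∑ a, permConjQ σ (Q v) (a, g) (a, g'))
        = ((lam : ℂ) • (1 : Matrix (Fin k → Fin n → B) (Fin k → Fin n → B) ℂ)
        - Matrix.of fun (g g' : Fin k → Fin n → B) =>
            ∑ v ∈ Finset.univ.filter (fun v : Fin k → Fin 2 => v ⟨0, by omega⟩ = 0),
              ∑ a, Q v (a, g) (a, g')).submatrix (bEquiv B σ) (bEquiv B σ) := by
      ext g g'
      simp only [Matrix.sub_apply, Matrix.smul_apply, Matrix.submatrix_apply,
        Matrix.of_apply, smul_eq_mul]
      congr 1
      · congr 1
        rw [Matrix.one_apply, Matrix.one_apply]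
        congr 1
        simp only [eq_iff_iff]
        exact ⟨fun h => h ▸ rfl, fun h => (bEquiv B σ).injective h⟩
      · refine Finset.sum_congr rfl fun v _ => ?_
        simpa using key8 (Q v) g g'
    rw [heq]
    exact h7.submatrix _
  · intro u g g'
    have h := h8 u (fun j => g j ∘ σ) (fun j => g' j ∘ σ)
    calc (∑ vk : Fin 2, ∑ a, permConjQ σ (Q (Function.update u ⟨k-1, by omega⟩ vk)) (a,g) (a,g'))
        = ∑ vk : Fin 2, ∑ a, Q (Function.update u ⟨k-1, by omega⟩ vk)
            (a, fun j => g j ∘ σ) (a, fun j => g' j ∘ σ) := by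
          refine Finset.sum_congr rfl fun vk _ => key8 _ g g'
      _ = ((Fintype.card B : ℂ) ^ n)⁻¹
          * (∑ vk : Fin 2, ∑ a, ∑ b : Fin n → B,
              Q (Function.update u ⟨k - 1, by omega⟩ vk)
                (a, Function.update (fun j => g j ∘ σ) ⟨k - 1, by omega⟩ b)
                (a, Function.update (fun j => g' j ∘ σ) ⟨k - 1, by omega⟩ b))
          * (if (fun j => g j ∘ σ) ⟨k - 1, by omega⟩ = (fun j => g' j ∘ σ) ⟨k - 1, by omega⟩
              then 1 else 0) := h
      _ = ((Fintype.card B : ℂ) ^ n)⁻¹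
          * (∑ vk : Fin 2, ∑ a, ∑ b : Fin n → B,
              permConjQ σ (Q (Function.update u ⟨k - 1, by omega⟩ vk))
                (a, Function.update g ⟨k - 1, by omega⟩ b)
                (a, Function.update g' ⟨k - 1, by omega⟩ b))
          * (if g ⟨k - 1, by omega⟩ = g' ⟨k - 1, by omega⟩ then 1 else 0) := by
          congr 1
          · congr 1
            refine Finset.sum_congr rfl fun vk _ => ?_
            set v' := Function.update u ⟨k - 1, by omega⟩ vk with hv'
            calc ∑ a, ∑ b : Fin n → B,
                  Q v' (a, Function.update (fun j => g j ∘ σ) ⟨k - 1, by omega⟩ b)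
                    (a, Function.update (fun j => g' j ∘ σ) ⟨k - 1, by omega⟩ b)
                = ∑ a, ∑ b : Fin n → B,
                  Q v' (cEquiv A σ a,
                      Function.update (fun j => g j ∘ σ) ⟨k - 1, by omega⟩ b)
                    (cEquiv A σ a,
                      Function.update (fun j => g' j ∘ σ) ⟨k - 1, by omega⟩ b) :=
                  (Equiv.sum_comp (cEquiv A σ) (fun a => ∑ b : Fin n → B,
                    Q v' (a, Function.update (fun j => g j ∘ σ) ⟨k - 1, by omega⟩ b)
                      (a, Function.update (fun j => g' j ∘ σ) ⟨k - 1, by omega⟩ b))).symm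
              _ = ∑ a, ∑ b : Fin n → B,
                  Q v' (cEquiv A σ a,
                      Function.update (fun j => g j ∘ σ) ⟨k - 1, by omega⟩ (cEquiv B σ b))
                    (cEquiv A σ a,
                      Function.update (fun j => g' j ∘ σ) ⟨k - 1, by omega⟩ (cEquiv B σ b)) :=
                  Finset.sum_congr rfl fun a _ =>
                    (Equiv.sum_comp (cEquiv B σ) (fun b =>
                      Q v' (cEquiv A σ a,
                          Function.update (fun j => g j ∘ σ) ⟨k - 1, by omega⟩ b)
                        (cEquiv A σ a,
                          Function.update (fun j => g' j ∘ σ) ⟨k - 1, by omega⟩ b))).symm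
              _ = ∑ a, ∑ b : Fin n → B,
                  permConjQ σ (Q v') (a, Function.update g ⟨k - 1, by omega⟩ b)
                    (a, Function.update g' ⟨k - 1, by omega⟩ b) := by
                  refine Finset.sum_congr rfl fun a _ => Finset.sum_congr rfl fun b _ => ?_
                  simp only [permConjQ, Matrix.of_apply, cEquiv_apply]
                  rw [update_comp, update_comp]
          · congr 1
            simp only [eq_iff_iff]
            exact ⟨fun h => (cEquiv B σ).injective h, fun h => h ▸ rfl⟩
  · have hG : (Matrix.of (fun (p q : (Fin n → A) × (Fin k → Fin n → B)) =>
          Γn (p.1, p.2 ⟨0, by omega⟩) (q.1, q.2 ⟨0, by omega⟩)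
            * ∏ j ∈ Finset.univ.erase ((⟨0, by omega⟩ : Fin k)),
                (if p.2 j = q.2 j then (1 : ℂ) else 0)))
        = (Matrix.of (fun (p q : (Fin n → A) × (Fin k → Fin n → B)) =>
          Γn (p.1, p.2 ⟨0, by omega⟩) (q.1, q.2 ⟨0, by omega⟩)
            * ∏ j ∈ Finset.univ.erase ((⟨0, by omega⟩ : Fin k)),
                (if p.2 j = q.2 j then (1 : ℂ) else 0))).submatrix (pEquiv σ) (pEquiv σ) := by
      subst hΓn
      ext ⟨f, g⟩ ⟨f', g'⟩
      simp only [Matrix.submatrix_apply, Matrix.of_apply, pEquiv_apply]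
      congr 1
      · exact (Equiv.prod_comp σ fun i => Γ (f i, g ⟨0, by omega⟩ i) (f' i, g' ⟨0, by omega⟩ i)).symm
      · refine Finset.prod_congr rfl fun j _ => ?_
        congr 1
        simp only [eq_iff_iff]
        exact ⟨fun h => h ▸ rfl, fun h => (cEquiv B σ).injective h⟩
    have htr : ∀ v : Fin k → Fin 2,
        (permConjQ σ (Q v) * Matrix.of (fun (p q : (Fin n → A) × (Fin k → Fin n → B)) =>
          Γn (p.1, p.2 ⟨0, by omega⟩) (q.1, q.2 ⟨0, by omega⟩)
            * ∏ j ∈ Finset.univ.erase ((⟨0, by omega⟩ : Fin k)),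
                (if p.2 j = q.2 j then (1 : ℂ) else 0))).trace
        = (Q v * Matrix.of (fun (p q : (Fin n → A) × (Fin k → Fin n → B)) =>
          Γn (p.1, p.2 ⟨0, by omega⟩) (q.1, q.2 ⟨0, by omega⟩)
            * ∏ j ∈ Finset.univ.erase ((⟨0, by omega⟩ : Fin k)),
                (if p.2 j = q.2 j then (1 : ℂ) else 0))).trace := by
      intro v
      conv_lhs => rw [permConjQ_eq, hG]
      rw [Matrix.submatrix_mul_equiv, trace_submatrix_equiv']
    calc (1 - ε : ℂ) ≤ _ := h9
      _ = _ := by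
        congr 1
        exact (Finset.sum_congr rfl fun v _ => (htr v).symm)

/-- The SDP for the `n`-fold tensor power channel is invariant under simultaneous
permutations of the `n` channel copies, and feasibility is preserved by symmetrizing
(averaging) a feasible point over all such permutations. -/
theorem SDP_permutation_symmetry
    (A B : Type) [Fintype A] [DecidableEq A] [Nonempty A]
    [Fintype B] [DecidableEq B] [Nonempty B]
    (ε : ℝ) (hε0 : 0 ≤ ε) (hε1 : ε ≤ 1)
    (k n : ℕ) (hk : 1 ≤ k) (hn : 1 ≤ n)
    (Γ : Matrix (A × B) (A × B) ℂ) (hΓpos : Γ.PosSemidef)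
    (hΓtr : ∀ a a', ∑ b, Γ (a, b) (a', b) = if a = a' then (1 : ℂ) else 0)
    (Γn : Matrix ((Fin n → A) × (Fin n → B)) ((Fin n → A) × (Fin n → B)) ℂ)
    (hΓn : Γn = Matrix.of fun (p q : (Fin n → A) × (Fin n → B)) =>
        ∏ i, Γ (p.1 i, p.2 i) (q.1 i, q.2 i))
    (lam : ℝ) (ρ : Matrix (Fin n → A) (Fin n → A) ℂ)
    (Q : (Fin k → Fin 2) →
      Matrix ((Fin n → A) × (Fin k → Fin n → B)) ((Fin n → A) × (Fin k → Fin n → B)) ℂ)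
    (hfeas : SDPFeasible A B ε k n hk Γn lam ρ Q) :
    -- (i) feasibility is preserved by conjugation with any permutation of the n copies
    (∀ σ : Equiv.Perm (Fin n),
      SDPFeasible A B ε k n hk Γn lam (permConjA σ ρ) (fun v => permConjQ σ (Q v)))
    -- (ii) the uniformly symmetrized point is feasible
    ∧ SDPFeasible A B ε k n hk Γn lam
        ((n.factorial : ℂ)⁻¹ • ∑ σ : Equiv.Perm (Fin n), permConjA σ ρ)
        (fun v => (n.factorial : ℂ)⁻¹ • ∑ σ : Equiv.Perm (Fin n), permConjQ σ (Q v)) := by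
  have key : ∀ σ : Equiv.Perm (Fin n),
      SDPFeasible A B ε k n hk Γn lam (permConjA σ ρ) (fun v => permConjQ σ (Q v)) :=
    fun σ => feas_perm A B ε k n hk Γ Γn hΓn lam ρ Q hfeas σ
  refine ⟨key, ?_⟩
  have hcne : ((n.factorial : ℂ)) ≠ 0 := Nat.cast_ne_zero.2 n.factorial_ne_zero
  have hcard : (Finset.univ : Finset (Equiv.Perm (Fin n))).card = n.factorial := by
    simp [Finset.card_univ, Fintype.card_perm]
  have hc : (0 : ℂ) ≤ ((n.factorial : ℂ))⁻¹ := by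
    rw [show ((n.factorial : ℂ)) = ((n.factorial : ℝ) : ℂ) from by norm_cast,
      ← Complex.ofReal_inv]
    exact Complex.zero_le_real.2 (by positivity)
  refine ⟨hfeas.1, ?_, ?_, ?_, ?_, ?_, ?_, ?_, ?_, ?_⟩
  · exact psd_smul' (psd_sum' _ fun σ => (key σ).2.1) hc
  · rw [Matrix.trace_smul, Matrix.trace_sum,
      Finset.sum_congr rfl fun σ _ => (key σ).2.2.1]
    simp [Finset.sum_const, hcard, nsmul_eq_mul, inv_mul_cancel₀ hcne]
  · have k4 : ∀ σ : Equiv.Perm (Fin n),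
        (∑ v : Fin k → Fin 2, permConjQ σ (Q v)) =
          Matrix.of fun (p q : (Fin n → A) × (Fin k → Fin n → B)) =>
            permConjA σ ρ p.1 q.1 * (if p.2 = q.2 then (1 : ℂ) else 0) :=
      fun σ => (key σ).2.2.2.1
    have hswap : (∑ v : Fin k → Fin 2,
        ((n.factorial : ℂ))⁻¹ • ∑ σ : Equiv.Perm (Fin n), permConjQ σ (Q v))
        = ((n.factorial : ℂ))⁻¹ • ∑ σ : Equiv.Perm (Fin n),
            ∑ v : Fin k → Fin 2, permConjQ σ (Q v) := by
      rw [← Finset.smul_sum, Finset.sum_comm]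
    rw [hswap, Finset.sum_congr rfl fun σ _ => k4 σ]
    ext ⟨f, g⟩ ⟨f', g'⟩
    simp only [Matrix.smul_apply, Matrix.sum_apply, Matrix.of_apply, smul_eq_mul]
    rw [mul_assoc, Finset.sum_mul]
  · intro v
    exact psd_smul' (psd_sum' _ fun σ => (key σ).2.2.2.2.1 v) hc
  · intro v π
    have k6 : ∀ σ : Equiv.Perm (Fin n),
        (Matrix.of fun (p q : (Fin n → A) × (Fin k → Fin n → B)) =>
          permConjQ σ (Q (v ∘ π)) (p.1, p.2 ∘ π) (q.1, q.2 ∘ π)) = permConjQ σ (Q v) :=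
      fun σ => (key σ).2.2.2.2.2.1 v π
    ext ⟨f, g⟩ ⟨f', g'⟩
    simp only [Matrix.of_apply, Matrix.smul_apply, Matrix.sum_apply, smul_eq_mul]
    congr 1
    refine Finset.sum_congr rfl fun σ _ => ?_
    have := entry_eq (k6 σ) (f, g) (f', g')
    simpa using this
  · intro v i hi1 hi2
    have heq : (Matrix.of fun (p q : (Fin n → A) × (Fin k → Fin n → B)) =>
          (((n.factorial : ℂ))⁻¹ • ∑ σ : Equiv.Perm (Fin n), permConjQ σ (Q v))
            (p.1, fun j => if (j : ℕ) < i then q.2 j else p.2 j)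
            (q.1, fun j => if (j : ℕ) < i then p.2 j else q.2 j))
        = ((n.factorial : ℂ))⁻¹ • ∑ σ : Equiv.Perm (Fin n),
            (Matrix.of fun (p q : (Fin n → A) × (Fin k → Fin n → B)) =>
              permConjQ σ (Q v)
                (p.1, fun j => if (j : ℕ) < i then q.2 j else p.2 j)
                (q.1, fun j => if (j : ℕ) < i then p.2 j else q.2 j)) := by
      ext p q
      simp only [Matrix.smul_apply, Matrix.sum_apply, Matrix.of_apply, smul_eq_mul]
    show Matrix.PosSemidef (Matrix.of fun (p q : (Fin n → A) × (Fin k → Fin n → B)) =>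
      (((n.factorial : ℂ))⁻¹ • ∑ σ : Equiv.Perm (Fin n), permConjQ σ (Q v))
        (p.1, fun j => if (j : ℕ) < i then q.2 j else p.2 j)
        (q.1, fun j => if (j : ℕ) < i then p.2 j else q.2 j))
    rw [heq]
    exact psd_smul' (psd_sum' _ fun σ => (key σ).2.2.2.2.2.2.1 v i hi1 hi2) hc
  · have heq : ((lam : ℂ) • (1 : Matrix (Fin k → Fin n → B) (Fin k → Fin n → B) ℂ)
        - Matrix.of fun (g g' : Fin k → Fin n → B) =>
            ∑ v ∈ Finset.univ.filter (fun v : Fin k → Fin 2 => v ⟨0, by omega⟩ = 0),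
              ∑ a, (((n.factorial : ℂ))⁻¹ • ∑ σ : Equiv.Perm (Fin n), permConjQ σ (Q v))
                (a, g) (a, g'))
        = ((n.factorial : ℂ))⁻¹ • ∑ σ : Equiv.Perm (Fin n),
            ((lam : ℂ) • (1 : Matrix (Fin k → Fin n → B) (Fin k → Fin n → B) ℂ)
              - Matrix.of fun (g g' : Fin k → Fin n → B) =>
                  ∑ v ∈ Finset.univ.filter (fun v : Fin k → Fin 2 => v ⟨0, by omega⟩ = 0),
                    ∑ a, permConjQ σ (Q v) (a, g) (a, g')) := by
      ext g g'
      simp only [Matrix.sub_apply, Matrix.smul_apply, Matrix.sum_apply, Matrix.of_apply,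
        smul_eq_mul]
      rw [mul_sum_comm₃, Finset.sum_sub_distrib, Finset.sum_const, hcard, mul_sub,
        nsmul_eq_mul, ← mul_assoc, inv_mul_cancel₀ hcne, one_mul]
    show Matrix.PosSemidef ((lam : ℂ) • (1 : Matrix (Fin k → Fin n → B) (Fin k → Fin n → B) ℂ)
        - Matrix.of fun (g g' : Fin k → Fin n → B) =>
            ∑ v ∈ Finset.univ.filter (fun v : Fin k → Fin 2 => v ⟨0, by omega⟩ = 0),
              ∑ a, (((n.factorial : ℂ))⁻¹ • ∑ σ : Equiv.Perm (Fin n), permConjQ σ (Q v))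
                (a, g) (a, g'))
    rw [heq]
    exact psd_smul' (psd_sum' _ fun σ => (key σ).2.2.2.2.2.2.2.1) hc
  · intro u g g'
    have k9 : ∀ σ : Equiv.Perm (Fin n),
        (∑ vk : Fin 2, ∑ a, permConjQ σ (Q (Function.update u ⟨k - 1, by omega⟩ vk))
            (a, g) (a, g'))
          = ((Fintype.card B : ℂ) ^ n)⁻¹
            * (∑ vk : Fin 2, ∑ a, ∑ b : Fin n → B,
                permConjQ σ (Q (Function.update u ⟨k - 1, by omega⟩ vk))
                  (a, Function.update g ⟨k - 1, by omega⟩ b)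
                  (a, Function.update g' ⟨k - 1, by omega⟩ b))
            * (if g ⟨k - 1, by omega⟩ = g' ⟨k - 1, by omega⟩ then 1 else 0) :=
      fun σ => (key σ).2.2.2.2.2.2.2.2.1 u g g'
    simp only [Matrix.smul_apply, Matrix.sum_apply, smul_eq_mul]
    rw [mul_sum_comm₃, mul_sum_comm₄, Finset.sum_congr rfl fun σ _ => k9 σ,
      ← Finset.sum_mul, ← Finset.mul_sum]
    ring
  · have k10 : ∀ σ : Equiv.Perm (Fin n),
        (1 - ε : ℂ) ≤ ((Fintype.card B : ℂ) ^ (n * (k - 1)))⁻¹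
          * ∑ v ∈ Finset.univ.filter (fun v : Fin k → Fin 2 => v ⟨0, by omega⟩ = 0),
              (permConjQ σ (Q v) * Matrix.of (fun (p q : (Fin n → A) × (Fin k → Fin n → B)) =>
                Γn (p.1, p.2 ⟨0, by omega⟩) (q.1, q.2 ⟨0, by omega⟩)
                  * ∏ j ∈ Finset.univ.erase ((⟨0, by omega⟩ : Fin k)),
                      (if p.2 j = q.2 j then (1 : ℂ) else 0))).trace :=
      fun σ => (key σ).2.2.2.2.2.2.2.2.2
    have htr : ∀ v : Fin k → Fin 2,
        ((((n.factorial : ℂ))⁻¹ • ∑ σ : Equiv.Perm (Fin n), permConjQ σ (Q v))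
          * Matrix.of (fun (p q : (Fin n → A) × (Fin k → Fin n → B)) =>
            Γn (p.1, p.2 ⟨0, by omega⟩) (q.1, q.2 ⟨0, by omega⟩)
              * ∏ j ∈ Finset.univ.erase ((⟨0, by omega⟩ : Fin k)),
                  (if p.2 j = q.2 j then (1 : ℂ) else 0))).trace
        = ((n.factorial : ℂ))⁻¹ * ∑ σ : Equiv.Perm (Fin n),
            (permConjQ σ (Q v) * Matrix.of (fun (p q : (Fin n → A) × (Fin k → Fin n → B)) =>
              Γn (p.1, p.2 ⟨0, by omega⟩) (q.1, q.2 ⟨0, by omega⟩)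
                * ∏ j ∈ Finset.univ.erase ((⟨0, by omega⟩ : Fin k)),
                    (if p.2 j = q.2 j then (1 : ℂ) else 0))).trace := by
      intro v
      rw [Matrix.smul_mul, Matrix.sum_mul, Matrix.trace_smul, Matrix.trace_sum, smul_eq_mul]
    calc (1 - ε : ℂ)
        = ((n.factorial : ℂ))⁻¹ * ∑ _σ : Equiv.Perm (Fin n), (1 - ε : ℂ) := by
          rw [Finset.sum_const, hcard, nsmul_eq_mul, ← mul_assoc,
            inv_mul_cancel₀ hcne, one_mul]
      _ ≤ ((n.factorial : ℂ))⁻¹ * ∑ σ : Equiv.Perm (Fin n),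
            (((Fintype.card B : ℂ) ^ (n * (k - 1)))⁻¹
              * ∑ v ∈ Finset.univ.filter (fun v : Fin k → Fin 2 => v ⟨0, by omega⟩ = 0),
                  (permConjQ σ (Q v)
                    * Matrix.of (fun (p q : (Fin n → A) × (Fin k → Fin n → B)) =>
                    Γn (p.1, p.2 ⟨0, by omega⟩) (q.1, q.2 ⟨0, by omega⟩)
                      * ∏ j ∈ Finset.univ.erase ((⟨0, by omega⟩ : Fin k)),
                          (if p.2 j = q.2 j then (1 : ℂ) else 0))).trace) :=
          mul_le_mul_of_nonneg_left (Finset.sum_le_sum fun σ _ => k10 σ) hc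
      _ = ((Fintype.card B : ℂ) ^ (n * (k - 1)))⁻¹
          * ∑ v ∈ Finset.univ.filter (fun v : Fin k → Fin 2 => v ⟨0, by omega⟩ = 0),
              ((((n.factorial : ℂ))⁻¹ • ∑ σ : Equiv.Perm (Fin n), permConjQ σ (Q v))
                * Matrix.of (fun (p q : (Fin n → A) × (Fin k → Fin n → B)) =>
                Γn (p.1, p.2 ⟨0, by omega⟩) (q.1, q.2 ⟨0, by omega⟩)
                  * ∏ j ∈ Finset.univ.erase ((⟨0, by omega⟩ : Fin k)),
                      (if p.2 j = q.2 j then (1 : ℂ) else 0))).trace := by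
          rw [Finset.sum_congr rfl fun v _ => htr v, ← Finset.mul_sum, ← Finset.mul_sum,
            Finset.sum_comm]
          ring
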